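/- arXiv:2207.01347 — 2 statements merged into one kernel-verified Lean document; each statement's English description precedes it below -/
import Mathlib

section
/- Let B be a nonempty cone in the real Banach space X (i.e., tu ∈ B whenever u ∈ B and t ≥ 0), let e ∈ X \ B with −e ∉ B, and let Q = {u + se : u ∈ B, s ≥ 0}. Then no nonempty subset of X \ Q links B; more precisely, for every nonempty A ⊂ X \ Q there exists Γ ∈ Φ (for instance Γ(u,t) = (1−t)u − te) such that Γ(A × (0,1]) ∩ B = ∅. -/
/-!
Deform every point along the straight segment to `-e`: `Γ(t)u = (1 - t)u - te`. If
`(1 - t)u - te` lay in the cone `B` for some `t ∈ (0, 1)`, rescaling by `(1 - t)⁻¹` would give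
`u = v + (t / (1 - t))e` with `v ∈ B`, i.e. `u ∈ Q`; at `t = 1` the deformed point is `-e ∉ B`.
-/

set_option autoImplicit false

open Filter Topology Bornology Set

/-- The class `Φ` of deformations of Schechter. -/
structure LinkingDeformation (X : Type*) [NormedAddCommGroup X] [NormedSpace ℝ X] where
  toFun : ℝ → X → X
  invFun : ℝ → X → X
  cont : ContinuousOn (fun p : ℝ × X => toFun p.1 p.2) (Set.Icc (0 : ℝ) 1 ×ˢ Set.univ)
  init : ∀ u : X, toFun 0 u = u
  left_inv : ∀ t ∈ Set.Ico (0 : ℝ) 1, Function.LeftInverse (invFun t) (toFun t)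
  right_inv : ∀ t ∈ Set.Ico (0 : ℝ) 1, Function.RightInverse (invFun t) (toFun t)
  inv_cont : ContinuousOn (fun p : ℝ × X => invFun p.1 p.2) (Set.Ico (0 : ℝ) 1 ×ˢ Set.univ)
  endpoint : ∃ q : X, (∀ u : X, toFun 1 u = q) ∧
    ∀ A : Set X, IsBounded A → ∀ ε > (0 : ℝ), ∃ δ > (0 : ℝ),
      ∀ t ∈ Set.Ico (1 - δ) (1 : ℝ), ∀ u ∈ A, ‖toFun t u - q‖ < ε
  bound : ∀ A : Set X, IsBounded A → ∀ t₀ ∈ Set.Ico (0 : ℝ) 1,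
    ∃ C : ℝ, ∀ u ∈ A, ∀ t ∈ Set.Icc (0 : ℝ) t₀, ‖toFun t u‖ + ‖invFun t u‖ ≤ C

/-- `A` links `B` in the sense of Schechter. -/
def Links {X : Type*} [NormedAddCommGroup X] [NormedSpace ℝ X] (A B : Set X) : Prop :=
  ∀ Γ : LinkingDeformation X, ∃ u ∈ A, ∃ t ∈ Set.Ioc (0 : ℝ) 1, Γ.toFun t u ∈ B

section

variable {X : Type*} [NormedAddCommGroup X] [NormedSpace ℝ X]

lemma norm_one_sub_smul_add_smul_le (u q : X) {t : ℝ} (ht : t ∈ Icc (0 : ℝ) 1) :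
    ‖(1 - t) • u + t • q‖ ≤ ‖u‖ + ‖q‖ := by
  obtain ⟨ht₀, ht₁⟩ := ht
  calc ‖(1 - t) • u + t • q‖ ≤ (1 - t) * ‖u‖ + t * ‖q‖ := by
        refine (norm_add_le _ _).trans_eq ?_
        rw [norm_smul, norm_smul, Real.norm_of_nonneg (by linarith), Real.norm_of_nonneg ht₀]
    _ ≤ ‖u‖ + ‖q‖ := by nlinarith [norm_nonneg u, norm_nonneg q]

lemma norm_one_sub_smul_add_smul_sub_right (u q : X) {t : ℝ} (ht : t ≤ 1) :
    ‖(1 - t) • u + t • q - q‖ = (1 - t) * ‖u - q‖ := by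
  rw [show (1 - t) • u + t • q - q = (1 - t) • (u - q) by module, norm_smul,
    Real.norm_of_nonneg (by linarith)]

namespace LinkingDeformation

noncomputable def lineTo (q : X) : LinkingDeformation X where
  toFun t u := (1 - t) • u + t • q
  invFun t u := (1 - t)⁻¹ • (u - t • q)
  cont := by fun_prop
  init u := by simp
  left_inv t ht u := by
    have : (1 : ℝ) - t ≠ 0 := by linarith [ht.2]
    simp only [add_sub_cancel_right, smul_smul, inv_mul_cancel₀ this, one_smul]
  right_inv t ht u := by
    have : (1 : ℝ) - t ≠ 0 := by linarith [ht.2]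
    simp only [smul_smul, mul_inv_cancel₀ this, one_smul, sub_add_cancel]
  inv_cont := by
    refine ContinuousOn.smul (ContinuousOn.inv₀ (by fun_prop) ?_) (by fun_prop)
    rintro ⟨t, u⟩ ⟨ht, -⟩
    linarith [ht.2]
  endpoint := by
    refine ⟨q, fun u => by simp, fun A hA ε hε => ?_⟩
    obtain ⟨R, hR⟩ := (Metric.isBounded_iff_subset_closedBall q).mp hA
    set R' := max R 0
    refine ⟨ε / (R' + 1), by positivity, fun t ht u hu => ?_⟩
    have hdist : ‖u - q‖ ≤ R' := (mem_closedBall_iff_norm.mp (hR hu)).trans (le_max_left _ _)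
    calc ‖(1 - t) • u + t • q - q‖ = (1 - t) * ‖u - q‖ :=
          norm_one_sub_smul_add_smul_sub_right u q ht.2.le
      _ ≤ ε / (R' + 1) * R' := by
          gcongr
          linarith [ht.1]
      _ < ε := by
          rw [div_mul_eq_mul_div, div_lt_iff₀ (by positivity)]
          nlinarith
  bound := by
    intro A hA t₀ ht₀
    obtain ⟨C, hC⟩ := isBounded_iff_forall_norm_le.mp hA
    have ht₀' : 0 < 1 - t₀ := by linarith [ht₀.2]
    refine ⟨(1 + (1 - t₀)⁻¹) * (max C 0 + ‖q‖), fun u hu t ht => ?_⟩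
    have hCu : ‖u‖ + ‖q‖ ≤ max C 0 + ‖q‖ := by
      linarith [(hC u hu).trans (le_max_left C 0)]
    have ht' : 0 < 1 - t := by linarith [ht.2]
    have hfun : ‖(1 - t) • u + t • q‖ ≤ ‖u‖ + ‖q‖ :=
      norm_one_sub_smul_add_smul_le u q ⟨ht.1, by linarith [ht.2, ht₀.2]⟩
    have hinv : ‖(1 - t)⁻¹ • (u - t • q)‖ ≤ (1 - t₀)⁻¹ * (‖u‖ + ‖q‖) := by
      rw [norm_smul, Real.norm_of_nonneg (by positivity)]
      gcongr
      · linarith [ht.2]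
      · calc ‖u - t • q‖ ≤ ‖u‖ + t * ‖q‖ := by
              refine (norm_sub_le _ _).trans_eq ?_
              rw [norm_smul, Real.norm_of_nonneg ht.1]
          _ ≤ ‖u‖ + ‖q‖ := by nlinarith [norm_nonneg q, ht.2, ht₀.2]
    show ‖(1 - t) • u + t • q‖ + ‖(1 - t)⁻¹ • (u - t • q)‖ ≤ _
    nlinarith [inv_nonneg.mpr ht₀'.le]

end LinkingDeformation

end

lemma exists_mem_add_smul_of_sub_smul_mem {X : Type*} [AddCommGroup X] [Module ℝ X] {B : Set X}
    (hcone : ∀ u ∈ B, ∀ t : ℝ, 0 ≤ t → t • u ∈ B) {u e : X} {t : ℝ} (ht : t ∈ Ico (0 : ℝ) 1)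
    (h : (1 - t) • u - t • e ∈ B) : ∃ v ∈ B, ∃ s : ℝ, 0 ≤ s ∧ u = v + s • e := by
  have ht' : 0 < 1 - t := by linarith [ht.2]
  refine ⟨_, hcone _ h _ (inv_nonneg.mpr ht'.le), t * (1 - t)⁻¹, by positivity [ht.1], ?_⟩
  rw [smul_sub, smul_smul, smul_smul, inv_mul_cancel₀ ht'.ne', one_smul]
  module

theorem stmt_4_general
    {X : Type*} [NormedAddCommGroup X] [NormedSpace ℝ X]
    (B : Set X)
    (hcone : ∀ u ∈ B, ∀ t : ℝ, 0 ≤ t → t • u ∈ B)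
    (e : X) (he' : -e ∉ B)
    (Q : Set X) (hQ : Q = {x : X | ∃ u ∈ B, ∃ s : ℝ, 0 ≤ s ∧ x = u + s • e}) :
    ∀ A : Set X, A ⊆ Qᶜ → A.Nonempty →
      ¬ Links A B ∧
      ∃ Γ : LinkingDeformation X,
        (∀ (u : X) (t : ℝ), Γ.toFun t u = (1 - t) • u - t • e) ∧
        ∀ u ∈ A, ∀ t ∈ Set.Ioc (0 : ℝ) 1, Γ.toFun t u ∉ B := by
  intro A hAQ _
  have hΓ (u : X) (t : ℝ) : (LinkingDeformation.lineTo (-e)).toFun t u = (1 - t) • u - t • e := by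
    simp only [LinkingDeformation.lineTo, smul_neg, sub_eq_add_neg]
  have hB : ∀ u ∈ A, ∀ t ∈ Ioc (0 : ℝ) 1, (1 - t) • u - t • e ∉ B := by
    intro u hu t ht hmem
    rcases ht.2.eq_or_lt with rfl | ht₁
    · exact he' (by simpa using hmem)
    · exact hAQ hu (hQ ▸ exists_mem_add_smul_of_sub_smul_mem hcone ⟨ht.1.le, ht₁⟩ hmem)
  refine ⟨fun hlinks => ?_, _, hΓ, fun u hu t ht => hΓ u t ▸ hB u hu t ht⟩
  obtain ⟨u, hu, t, ht, hmem⟩ := hlinks (LinkingDeformation.lineTo (-e))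
  exact hB u hu t ht (hΓ u t ▸ hmem)

/-- **Lemma 2.**  Let `B` be a nonempty cone, `e ∈ X \ B` with `-e ∉ B`, and
`Q = {u + s e : u ∈ B, s ≥ 0}`.  Then no nonempty subset `A` of `X \ Q` links
`B`: there is `Γ ∈ Φ` with `Γ(A × (0,1]) ∩ B = ∅`. -/
theorem stmt_4
    {X : Type*} [NormedAddCommGroup X] [NormedSpace ℝ X] [CompleteSpace X]
    (B : Set X) (hBne : B.Nonempty)
    (hcone : ∀ u ∈ B, ∀ t : ℝ, 0 ≤ t → t • u ∈ B)
    (e : X) (he : e ∉ B) (he' : -e ∉ B)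
    (Q : Set X) (hQ : Q = {x : X | ∃ u ∈ B, ∃ s : ℝ, 0 ≤ s ∧ x = u + s • e}) :
    ∀ A : Set X, A ⊆ Qᶜ → A.Nonempty →
      ¬ Links A B ∧
      ∃ Γ : LinkingDeformation X,
        (∀ (u : X) (t : ℝ), Γ.toFun t u = (1 - t) • u - t • e) ∧
        ∀ u ∈ A, ∀ t ∈ Set.Ioc (0 : ℝ) 1, Γ.toFun t u ∉ B :=
  stmt_4_general B hcone e he' Q hQ
end

section
/- Let N = 4 and l ≥ 2. There exist constants c₂₅, c₂₆, c₂₇, c₂₈ > 0 such that for all μ ≥ μ₀ and all v ∈ N_{l−1} ∩ S: (i) ∫_Ω |∇(v_μ − v)|² dx ≤ c₂₅ μ^{−2}; (ii) ∫_Ω |∇v_μ|² dx ≤ ∫_Ω |∇v|² dx + c₂₆ μ^{−2}; (iii) ∫_Ω v_μ⁴ dx ≥ ∫_Ω v⁴ dx − c₂₇ μ^{−4}; (iv) ∫_Ω [a(v_μ⁻)² + b(v_μ⁺)²] dx ≥ ∫_Ω [a(v⁻)² + b(v⁺)²] dx − c₂₈ μ^{−4}. In particular, there exists c₂₉ > 0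 such that for all t ≥ 0, E(tv_μ) ≤ ½(I(v,a,b) + c₂₉ μ^{−2}) t² − ¼(∫_Ω v⁴ dx − c₂₇ μ^{−4}) t⁴. -/
set_option autoImplicit false
set_option maxHeartbeats 1600000

open Filter Topology Set MeasureTheory
open scoped RealInnerProductSpace

noncomputable section AuxStmt15

local notation "E4" => EuclideanSpace ℝ (Fin 4)

private theorem stmt15_norm_grad_eq (f : E4 → ℝ) (x : E4) :
    ‖gradient f x‖ = ‖fderiv ℝ f x‖ := by
  rw [gradient]; exact (InnerProductSpace.toDual ℝ E4).symm.norm_map _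

private theorem stmt15_grad_const (c : ℝ) (x : E4) : gradient (fun _ : E4 => c) x = 0 := by
  rw [gradient, fderiv_fun_const]; simp

private theorem stmt15_grad_const_mul (f : E4 → ℝ) (t : ℝ) (x : E4) :
    gradient (fun y => t * f y) x = t • gradient f x := by
  rcases eq_or_ne t 0 with rfl | ht
  · simp only [zero_mul, zero_smul]
    exact stmt15_grad_const 0 x
  · by_cases hd : DifferentiableAt ℝ f x
    · rw [gradient, gradient, fderiv_const_mul hd t, LinearIsometryEquiv.map_smul]
    · have hnd : ¬ DifferentiableAt ℝ (fun y => t * f y) x := by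
        intro h
        have := h.const_mul t⁻¹
        simp only [← mul_assoc, inv_mul_cancel₀ ht, one_mul] at this
        exact hd this
      rw [gradient_eq_zero_of_not_differentiableAt hnd,
        gradient_eq_zero_of_not_differentiableAt hd, smul_zero]

private theorem stmt15_philip (η : ℝ → ℝ) (hηsmooth : ContDiff ℝ (⊤ : ℕ∞) η)
    (hηderiv : ∀ r : ℝ, |deriv η r| ≤ 5) (μ : ℝ) (hμ : 0 < μ) (x₀ : E4) :
    LipschitzWith (5 * μ.toNNReal) (fun y : E4 => η (μ * ‖y - x₀‖)) := by
  have h1 : LipschitzWith 5 η := by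
    apply lipschitzWith_of_nnnorm_deriv_le (hηsmooth.differentiable (by simp))
    intro x
    have := hηderiv x
    rw [← NNReal.coe_le_coe]
    simpa [nnnorm, Real.norm_eq_abs] using this
  have h2 : LipschitzWith μ.toNNReal (fun y : E4 => μ * ‖y - x₀‖) := by
    apply LipschitzWith.of_dist_le_mul
    intro x y
    have he : dist (μ * ‖x - x₀‖) (μ * ‖y - x₀‖) = μ * |‖x - x₀‖ - ‖y - x₀‖| := by
      rw [Real.dist_eq, ← mul_sub, abs_mul, abs_of_pos hμ]
    rw [he, Real.coe_toNNReal _ hμ.le]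
    have habs : |‖x - x₀‖ - ‖y - x₀‖| ≤ dist x y := by
      have := abs_norm_sub_norm_le (x - x₀) (y - x₀)
      simpa [dist_eq_norm, sub_sub_sub_cancel_right] using this
    exact mul_le_mul_of_nonneg_left habs hμ.le
  exact h1.comp h2

private theorem stmt15_phifderiv (η : ℝ → ℝ) (hηsmooth : ContDiff ℝ (⊤ : ℕ∞) η)
    (hηderiv : ∀ r : ℝ, |deriv η r| ≤ 5) (μ : ℝ) (hμ : 0 < μ) (x₀ x : E4) :
    ‖fderiv ℝ (fun y : E4 => η (μ * ‖y - x₀‖)) x‖ ≤ 5 * μ := by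
  have h := norm_fderiv_le_of_lipschitz ℝ (stmt15_philip η hηsmooth hηderiv μ hμ x₀) (x₀ := x)
  refine h.trans_eq ?_
  push_cast [Real.coe_toNNReal _ hμ.le]
  ring

private theorem stmt15_phidiff (η : ℝ → ℝ) (hηsmooth : ContDiff ℝ (⊤ : ℕ∞) η)
    (hηzero : ∀ r : ℝ, r ≤ 3 / 4 → η r = 0)
    (μ : ℝ) (hμ : 0 < μ) (x₀ x : E4) :
    DifferentiableAt ℝ (fun y : E4 => η (μ * ‖y - x₀‖)) x := by
  rcases eq_or_ne x x₀ with rfl | hx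
  · have hev : (fun y : E4 => η (μ * ‖y - x‖)) =ᶠ[nhds x] (fun _ => (0:ℝ)) := by
      have hb : Metric.ball x (3 / (4 * μ)) ∈ nhds x :=
        Metric.ball_mem_nhds _ (by positivity)
      filter_upwards [hb] with y hy
      apply hηzero
      rw [Metric.mem_ball, dist_eq_norm] at hy
      calc μ * ‖y - x‖ ≤ μ * (3 / (4 * μ)) := mul_le_mul_of_nonneg_left hy.le hμ.le
        _ = 3 / 4 := by field_simp
    exact (differentiableAt_const (0:ℝ)).congr_of_eventuallyEq hev
  · have h1 : ContDiffAt ℝ 1 (fun y : E4 => μ * ‖y - x₀‖) x := by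
      have hn : ContDiffAt ℝ 1 (fun y : E4 => ‖y - x₀‖) x := by
        have hne : x - x₀ ≠ 0 := sub_ne_zero.mpr hx
        exact (contDiffAt_norm ℝ hne).comp x (contDiffAt_id.sub contDiffAt_const)
      exact contDiffAt_const.mul hn
    exact ((hηsmooth.contDiffAt.of_le (by simp)).comp x h1).differentiableAt one_ne_zero

private theorem stmt15_ev_off_ball (η : ℝ → ℝ) (hηone : ∀ r : ℝ, 1 ≤ r → η r = 1)
    (μ : ℝ) (hμ : 0 < μ) (x₀ x : E4) (w : E4 → ℝ) (hx : 1/μ < ‖x - x₀‖) :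
    (fun y => η (μ * ‖y - x₀‖) * w y) =ᶠ[nhds x] w := by
  have hopen : IsOpen {y : E4 | 1/μ < ‖y - x₀‖} :=
    isOpen_lt continuous_const ((continuous_id.sub continuous_const).norm)
  filter_upwards [hopen.mem_nhds hx] with y hy
  have h1 : (1:ℝ) ≤ μ * ‖y - x₀‖ := by
    have h2 : 1/μ < ‖y - x₀‖ := hy
    rw [div_lt_iff₀ hμ] at h2
    nlinarith
  rw [hηone _ h1, one_mul]

private theorem stmt15_F_le (a b u : ℝ) (ha : 0 ≤ a) (hab : a ≤ b) :
    a * (max (-u) 0)^2 + b * (max u 0)^2 ≤ b * u^2 := by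
  rcases le_total u 0 with h | h
  · rw [max_eq_left (by linarith : (0:ℝ) ≤ -u), max_eq_right h]
    nlinarith
  · rw [max_eq_right (by linarith : -u ≤ (0:ℝ)), max_eq_left h]
    nlinarith

private theorem stmt15_F_mono (a b w : ℝ) (ha : 0 ≤ a) (hb : 0 ≤ b) (φ : ℝ)
    (hφ0 : 0 ≤ φ) (hφ1 : φ ≤ 1) :
    a * (max (-(φ * w)) 0)^2 + b * (max (φ * w) 0)^2
      ≤ a * (max (-w) 0)^2 + b * (max w 0)^2 := by
  have hφ2 : φ^2 ≤ 1 := by nlinarith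
  rcases le_total 0 w with h | h
  · have h1 : max (-(φ*w)) 0 = 0 := max_eq_right (by nlinarith)
    have h2 : max (-w) 0 = 0 := max_eq_right (by linarith)
    have h3 : max (φ*w) 0 = φ*w := max_eq_left (by nlinarith)
    have h4 : max w 0 = w := max_eq_left h
    rw [h1, h2, h3, h4]
    have : (φ*w)^2 ≤ w^2 := by nlinarith [sq_nonneg w]
    nlinarith
  · have h1 : max (φ*w) 0 = 0 := max_eq_right (by nlinarith)
    have h2 : max w 0 = 0 := max_eq_right h
    have h3 : max (-(φ*w)) 0 = -(φ*w) := max_eq_left (by nlinarith)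
    have h4 : max (-w) 0 = -w := max_eq_left (by linarith)
    rw [h1, h2, h3, h4]
    have : (φ*w)^2 ≤ w^2 := by nlinarith [sq_nonneg w]
    nlinarith

private theorem stmt15_F_scale (a b u t : ℝ) (ht : 0 ≤ t) :
    a * (max (-(t * u)) 0)^2 + b * (max (t * u) 0)^2
      = t^2 * (a * (max (-u) 0)^2 + b * (max u 0)^2) := by
  have h1 : max (-(t*u)) 0 = t * max (-u) 0 := by
    rw [show -(t*u) = t * (-u) by ring]
    rcases le_total u 0 with h | h
    · rw [max_eq_left (by nlinarith), max_eq_left (by linarith)]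
    · rw [max_eq_right (by nlinarith), max_eq_right (by linarith), mul_zero]
  have h2 : max (t*u) 0 = t * max u 0 := by
    rcases le_total 0 u with h | h
    · rw [max_eq_left (by nlinarith), max_eq_left h]
    · rw [max_eq_right (by nlinarith), max_eq_right h, mul_zero]
  rw [h1, h2]; ring

private theorem stmt15_pow4_le_of_abs_le (u C : ℝ) (h : |u| ≤ C) : u^4 ≤ C^4 := by
  have h2 : u^2 ≤ C^2 := by nlinarith [sq_abs u, abs_nonneg u]
  nlinarith [sq_nonneg u, sq_nonneg C]

private theorem stmt15_sq_max_le (u : ℝ) :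
    (max (-u) 0)^2 ≤ u^2 ∧ (max u 0)^2 ≤ u^2 := by
  constructor
  · rcases le_total u 0 with h | h
    · rw [max_eq_left (by linarith : (0:ℝ) ≤ -u)]; nlinarith
    · rw [max_eq_right (by linarith : -u ≤ (0:ℝ))]; nlinarith
  · rcases le_total 0 u with h | h
    · rw [max_eq_left h]
    · rw [max_eq_right h]; nlinarith

private theorem stmt15_int_le_ind (Ω s : Set E4) (hΩ : MeasurableSet Ω) (hs : MeasurableSet s)
    (hfin : volume s ≠ ⊤) (c : ℝ) (hc : 0 ≤ c) (f : E4 → ℝ)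
    (h0 : ∀ x ∈ Ω, 0 ≤ f x) (hle : ∀ x ∈ Ω, f x ≤ s.indicator (fun _ => c) x) :
    ∫ x in Ω, f x ≤ c * (volume s).toReal := by
  have hind : Integrable (s.indicator fun _ => c) (volume.restrict Ω) := by
    rw [integrable_indicator_iff hs]
    refine integrableOn_const ?_
    rw [Measure.restrict_apply hs]
    exact (lt_of_le_of_lt (measure_mono inter_subset_left) (lt_top_iff_ne_top.2 hfin)).ne
  have h0' : (0 : E4 → ℝ) ≤ᵐ[volume.restrict Ω] f := by
    rw [Filter.EventuallyLE, ae_restrict_iff' hΩ]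
    exact ae_of_all _ (fun x hx => h0 x hx)
  have hle' : f ≤ᵐ[volume.restrict Ω] s.indicator (fun _ => c) := by
    rw [Filter.EventuallyLE, ae_restrict_iff' hΩ]
    exact ae_of_all _ (fun x hx => hle x hx)
  refine (integral_mono_of_nonneg h0' hind hle').trans ?_
  rw [integral_indicator_const _ hs]
  simp only [smul_eq_mul, measureReal_def, Measure.restrict_apply hs]
  calc (volume (s ∩ Ω)).toReal * c ≤ (volume s).toReal * c :=
        mul_le_mul_of_nonneg_right
          (ENNReal.toReal_mono hfin (measure_mono inter_subset_left)) hc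
    _ = c * (volume s).toReal := mul_comm _ _

private theorem stmt15_cb_vol (x₀ : E4) (r : ℝ) (hr : 0 < r) :
    (volume (Metric.closedBall x₀ r)).toReal
      = r^4 * (volume (Metric.ball (0:E4) 1)).toReal := by
  rw [Measure.addHaar_closedBall _ _ hr.le]
  rw [ENNReal.toReal_mul, ENNReal.toReal_ofReal (by positivity)]
  congr 2
  simp [finrank_euclideanSpace]

private theorem stmt15_bound_on_compact {X : Type*} [NormedAddCommGroup X] [NormedSpace ℝ X]
    {F : Type*} [NormedAddCommGroup F] [NormedSpace ℝ F] {α : Type*} [TopologicalSpace α]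
    (M : Submodule ℝ X) [FiniteDimensional ℝ M]
    (T : X →ₗ[ℝ] α → F) (K : Set α) (hK : IsCompact K)
    (hcont : ∀ u : X, u ∈ M → ContinuousOn (T u) K) :
    ∃ C : ℝ, 0 < C ∧ ∀ u ∈ M, ∀ x ∈ K, ‖T u x‖ ≤ C * ‖u‖ := by
  classical
  set n := Module.finrank ℝ M
  let b : Module.Basis (Fin n) ℝ M := Module.finBasis ℝ M
  have hB : ∀ i : Fin n, ∃ B : ℝ, ∀ x ∈ K, ‖T (b i) x‖ ≤ B := fun i =>
    hK.exists_bound_of_continuousOn (hcont _ (b i).2)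
  choose B hBle using hB
  let c : Fin n → ℝ := fun i => ‖LinearMap.toContinuousLinearMap (b.coord i)‖
  refine ⟨1 + ∑ i, c i * max (B i) 0, by positivity, ?_⟩
  intro u hu x hx
  have key : (T u) x = ∑ i, b.repr ⟨u, hu⟩ i • (T (b i)) x := by
    have h1 : (⟨u, hu⟩ : M) = ∑ i, b.repr ⟨u, hu⟩ i • b i := (b.sum_repr ⟨u, hu⟩).symm
    have h2 : u = ∑ i, b.repr ⟨u, hu⟩ i • (b i : X) := by
      conv_lhs => rw [show u = ((⟨u, hu⟩ : M) : X) from rfl, h1]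
      push_cast
      rfl
    have h3 : T u = T (∑ i, b.repr ⟨u, hu⟩ i • (b i : X)) := by rw [← h2]
    rw [h3]
    simp [map_sum, _root_.map_smul, Finset.sum_apply]
  rw [key]
  calc ‖∑ i, b.repr ⟨u, hu⟩ i • (T (b i)) x‖ ≤ ∑ i, ‖b.repr ⟨u, hu⟩ i • (T (b i)) x‖ :=
        norm_sum_le _ _
    _ ≤ ∑ i, (c i * max (B i) 0) * ‖u‖ := by
        apply Finset.sum_le_sum
        intro i _
        rw [norm_smul]
        have h1 : ‖b.repr ⟨u, hu⟩ i‖ ≤ c i * ‖u‖ := by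
          have := (LinearMap.toContinuousLinearMap (b.coord i)).le_opNorm ⟨u, hu⟩
          simpa [Module.Basis.coord_apply] using this
        have h2 : ‖T (b i) x‖ ≤ max (B i) 0 := le_max_of_le_left (hBle i x hx)
        calc ‖b.repr ⟨u, hu⟩ i‖ * ‖T (b i) x‖ ≤ (c i * ‖u‖) * max (B i) 0 :=
              mul_le_mul h1 h2 (norm_nonneg _) (by positivity)
          _ = (c i * max (B i) 0) * ‖u‖ := by ring
    _ = (∑ i, c i * max (B i) 0) * ‖u‖ := by rw [Finset.sum_mul]
    _ ≤ (1 + ∑ i, c i * max (B i) 0) * ‖u‖ := by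
        apply mul_le_mul_of_nonneg_right _ (norm_nonneg _)
        linarith

end AuxStmt15

/-- **Lemma 7 (estimates for the truncated eigenfunctions `v_μ`, `N = 4`).**
`Ω ⊂ ℝ⁴` a bounded domain, `0 < a ≤ b`, `x₀ ∈ Ω`, `μ₀ > 1/dist(x₀,∂Ω)`,
`η` a smooth cutoff vanishing near `x₀`, `v_μ(x) = η(μ|x-x₀|) v(x)`, and
`N_{l-1}` the span of the Dirichlet eigenfunctions of `-Δ` with eigenvalue
`≤ λ_{l-1}`.  There are constants `c₂₅, c₂₆, c₂₇, c₂₈ > 0` such that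
(i)–(iv) hold for all `μ ≥ μ₀` and `v ∈ N_{l-1} ∩ S`; in particular there is
`c₂₉ > 0` with
`E(t v_μ) ≤ ½ (I(v,a,b) + c₂₉ μ⁻²) t² - ¼ (∫ v⁴ - c₂₇ μ⁻⁴) t⁴` for `t ≥ 0`. -/
theorem stmt_15
    (Ω : Set (EuclideanSpace ℝ (Fin 4)))
    (hΩopen : IsOpen Ω) (hΩconn : IsConnected Ω) (hΩbdd : Bornology.IsBounded Ω)
    (a b : ℝ) (hapos : 0 < a) (hab : a ≤ b)
    (x₀ : EuclideanSpace ℝ (Fin 4)) (hx₀ : x₀ ∈ Ω)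
    (μ₀ : ℝ) (hμ₀pos : 0 < μ₀) (hμ₀ : 1 / μ₀ < Metric.infDist x₀ Ωᶜ)
    -- the cutoff `η`
    (η : ℝ → ℝ) (hηsmooth : ContDiff ℝ (⊤ : ℕ∞) η)
    (hηrange : ∀ r : ℝ, η r ∈ Set.Icc (0 : ℝ) 1)
    (hηzero : ∀ r : ℝ, r ≤ 3 / 4 → η r = 0) (hηone : ∀ r : ℝ, 1 ≤ r → η r = 1)
    (hηderiv : ∀ r : ℝ, |deriv η r| ≤ 5)
    -- `X` realizes `H¹₀(Ω)`
    {X : Type*} [NormedAddCommGroup X] [InnerProductSpace ℝ X] [CompleteSpace X]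
    (val : X →ₗ[ℝ] (EuclideanSpace ℝ (Fin 4) → ℝ))
    (grad : X →ₗ[ℝ] (EuclideanSpace ℝ (Fin 4) → EuclideanSpace ℝ (Fin 4)))
    (hval2 : ∀ u : X, Integrable (fun x => (val u x) ^ 2) (volume.restrict Ω))
    (hgrad2 : ∀ u : X, Integrable (fun x => ‖grad u x‖ ^ 2) (volume.restrict Ω))
    (hinner : ∀ u v : X, ⟪u, v⟫ = ∫ x in Ω, ⟪grad u x, grad v x⟫)
    (hval0 : ∀ u : X, (∀ᵐ x ∂(volume.restrict Ω), val u x = 0) → u = 0)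
    (hdense : Dense {u : X | ∃ φ : EuclideanSpace ℝ (Fin 4) → ℝ,
      ContDiff ℝ (⊤ : ℕ∞) φ ∧ HasCompactSupport φ ∧ tsupport φ ⊆ Ω ∧
      val u = φ ∧ grad u = fun x => gradient φ x})
    (hvalcont : ∀ (u : ℕ → X) (v : X), Tendsto u atTop (𝓝 v) →
      Tendsto (fun k => ∫ x in Ω, (val (u k) x - val v x) ^ 2) atTop (𝓝 0))
    -- Dirichlet eigenvalues and eigenspaces of `-Δ` in `Ω`
    (lam : ℕ → ℝ) (hlampos : 0 < lam 1)
    (hlammono : ∀ k, 1 ≤ k → lam k < lam (k + 1))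
    (Eig : ℝ → Set X)
    (hEig : ∀ μ, Eig μ =
      {u : X | ∀ ζ : X, ⟪u, ζ⟫ = μ * ∫ x in Ω, val u x * val ζ x})
    (hEigne : ∀ k, 1 ≤ k → Eig (lam k) ≠ {0})
    (hEigfin : ∀ k, 1 ≤ k → FiniteDimensional ℝ (Submodule.span ℝ (Eig (lam k))))
    (hEigall : ∀ μ : ℝ, Eig μ ≠ {0} → ∃ k, 1 ≤ k ∧ μ = lam k)
    (hEigcomplete :
      (Submodule.span ℝ (⋃ k ∈ {k : ℕ | 1 ≤ k}, Eig (lam k))).topologicalClosure = ⊤)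
    (Nl : ℕ → Set X)
    (hNl : ∀ k, Nl k = (Submodule.span ℝ (⋃ j ∈ Set.Icc 1 k, Eig (lam j)) : Set X))
    (l : ℕ) (hl : 2 ≤ l)
    -- interior regularity of the eigenfunctions
    (hreg : ∀ v : X, v ∈ Nl (l - 1) →
      ContDiffOn ℝ 2 (val v) Ω ∧ (∀ x ∈ Ω, grad v x = gradient (val v) x) ∧
      Integrable (fun x => (val v x) ^ 4) (volume.restrict Ω)) :
    ∃ c25 c26 c27 c28 : ℝ, 0 < c25 ∧ 0 < c26 ∧ 0 < c27 ∧ 0 < c28 ∧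
      (∀ μ : ℝ, μ₀ ≤ μ → ∀ v : X, v ∈ Nl (l - 1) → ‖v‖ = 1 →
        -- (i)
        ((∫ x in Ω,
            ‖gradient (fun y => η (μ * ‖y - x₀‖) * val v y - val v y) x‖ ^ 2)
          ≤ c25 / μ ^ 2) ∧
        -- (ii)
        ((∫ x in Ω, ‖gradient (fun y => η (μ * ‖y - x₀‖) * val v y) x‖ ^ 2)
          ≤ (∫ x in Ω, ‖grad v x‖ ^ 2) + c26 / μ ^ 2) ∧
        -- (iii)
        ((∫ x in Ω, (val v x) ^ 4) - c27 / μ ^ 4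
          ≤ ∫ x in Ω, (η (μ * ‖x - x₀‖) * val v x) ^ 4) ∧
        -- (iv)
        ((∫ x in Ω, (a * (max (-(val v x)) 0) ^ 2 + b * (max (val v x) 0) ^ 2))
            - c28 / μ ^ 4
          ≤ ∫ x in Ω, (a * (max (-(η (μ * ‖x - x₀‖) * val v x)) 0) ^ 2 +
              b * (max (η (μ * ‖x - x₀‖) * val v x) 0) ^ 2))) ∧
      -- in particular
      (∃ c29 : ℝ, 0 < c29 ∧
        ∀ μ : ℝ, μ₀ ≤ μ → ∀ v : X, v ∈ Nl (l - 1) → ‖v‖ = 1 →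
        ∀ t : ℝ, 0 ≤ t →
          (1 / 2) * (∫ x in Ω,
              ‖gradient (fun y => t * (η (μ * ‖y - x₀‖) * val v y)) x‖ ^ 2)
          - (1 / 2) * (∫ x in Ω,
              (a * (max (-(t * (η (μ * ‖x - x₀‖) * val v x))) 0) ^ 2 +
               b * (max (t * (η (μ * ‖x - x₀‖) * val v x)) 0) ^ 2))
          - (1 / 4) * (∫ x in Ω, (t * (η (μ * ‖x - x₀‖) * val v x)) ^ 4) ≤
          (1 / 2) * (((∫ x in Ω, ‖grad v x‖ ^ 2)
              - a * (∫ x in Ω, (max (-(val v x)) 0) ^ 2)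
              - b * (∫ x in Ω, (max (val v x) 0) ^ 2)) + c29 / μ ^ 2) * t ^ 2
          - (1 / 4) * ((∫ x in Ω, (val v x) ^ 4) - c27 / μ ^ 4) * t ^ 4) := by
  classical
  have hb : (0:ℝ) < b := lt_of_lt_of_le hapos hab
  have hΩm : MeasurableSet Ω := hΩopen.measurableSet
  -- the finite-dimensional subspace
  set M : Submodule ℝ X := Submodule.span ℝ (⋃ j ∈ Set.Icc 1 (l-1), Eig (lam j)) with hMdef
  haveI hMfin : FiniteDimensional ℝ M := by
    rw [hMdef, Submodule.span_iUnion₂]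
    haveI : ∀ j : Set.Icc 1 (l-1), FiniteDimensional ℝ (Submodule.span ℝ (Eig (lam j))) :=
      fun j => hEigfin j j.2.1
    haveI : Finite (Set.Icc 1 (l-1)) := Set.finite_Icc 1 (l-1)
    rw [iSup_subtype']
    infer_instance
  have hNlM : ∀ v : X, v ∈ Nl (l-1) → v ∈ M := by
    intro v hv; rw [hNl] at hv; exact hv
  have hregM : ∀ u : X, u ∈ M →
      ContDiffOn ℝ 2 (val u) Ω ∧ (∀ x ∈ Ω, grad u x = gradient (val u) x) ∧
      Integrable (fun x => (val u x) ^ 4) (volume.restrict Ω) := by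
    intro u hu
    exact hreg u (by rw [hNl]; exact hu)
  -- the compact ball
  set K : Set (EuclideanSpace ℝ (Fin 4)) := Metric.closedBall x₀ (1/μ₀) with hKdef
  have hKΩ : K ⊆ Ω := by
    intro y hy
    by_contra hyΩ
    have h1 : Metric.infDist x₀ Ωᶜ ≤ dist x₀ y := Metric.infDist_le_dist_of_mem hyΩ
    rw [Metric.mem_closedBall] at hy
    rw [dist_comm] at h1
    linarith [hμ₀, hy, h1]
  have hKc : IsCompact K := isCompact_closedBall x₀ (1/μ₀)
  -- uniform bounds on K
  obtain ⟨C1, hC1pos, hC1⟩ := stmt15_bound_on_compact M val K hKc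
    (fun u hu => ((hregM u hu).1.continuousOn).mono hKΩ)
  obtain ⟨C2, hC2pos, hC2⟩ := stmt15_bound_on_compact M grad K hKc (by
    intro u hu
    have h1 : ContinuousOn (fun x => gradient (val u) x) Ω := by
      have hfd : ContinuousOn (fderiv ℝ (val u)) Ω :=
        (hregM u hu).1.continuousOn_fderiv_of_isOpen hΩopen (by norm_num)
      exact (InnerProductSpace.toDual ℝ
        (EuclideanSpace ℝ (Fin 4))).symm.continuous.comp_continuousOn hfd
    have h2 : ContinuousOn (grad u) Ω :=
      h1.congr (fun x hx => (hregM u hu).2.1 x hx)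
    exact h2.mono hKΩ)
  set C₀ : ℝ := max C1 C2 with hC₀def
  have hC₀pos : 0 < C₀ := lt_of_lt_of_le hC1pos (le_max_left _ _)
  have hvalb : ∀ u ∈ M, ∀ x ∈ K, |val u x| ≤ C₀ * ‖u‖ := by
    intro u hu x hx
    have := hC1 u hu x hx
    rw [Real.norm_eq_abs] at this
    have h2 : C1 * ‖u‖ ≤ C₀ * ‖u‖ :=
      mul_le_mul_of_nonneg_right (le_max_left _ _) (norm_nonneg _)
    linarith
  have hgradb : ∀ u ∈ M, ∀ x ∈ K, ‖grad u x‖ ≤ C₀ * ‖u‖ := by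
    intro u hu x hx
    have := hC2 u hu x hx
    have h2 : C2 * ‖u‖ ≤ C₀ * ‖u‖ :=
      mul_le_mul_of_nonneg_right (le_max_right _ _) (norm_nonneg _)
    linarith
  -- constants
  set D : ℝ := 5*C₀ + 2*C₀/μ₀ with hDdef
  have hDpos : 0 < D := by positivity
  set vb : ℝ := (volume (Metric.ball (0:EuclideanSpace ℝ (Fin 4)) 1)).toReal with hvbdef
  have hvbpos : 0 < vb := by
    rw [hvbdef]
    exact ENNReal.toReal_pos (Metric.measure_ball_pos _ _ one_pos).ne' measure_ball_lt_top.ne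
  have hmain : ∀ μ : ℝ, μ₀ ≤ μ → ∀ v : X, v ∈ Nl (l - 1) → ‖v‖ = 1 →
        ((∫ x in Ω,
            ‖gradient (fun y => η (μ * ‖y - x₀‖) * val v y - val v y) x‖ ^ 2)
          ≤ D^2*vb / μ ^ 2) ∧
        ((∫ x in Ω, ‖gradient (fun y => η (μ * ‖y - x₀‖) * val v y) x‖ ^ 2)
          ≤ (∫ x in Ω, ‖grad v x‖ ^ 2) + D^2*vb / μ ^ 2) ∧
        ((∫ x in Ω, (val v x) ^ 4) - C₀^4*vb / μ ^ 4
          ≤ ∫ x in Ω, (η (μ * ‖x - x₀‖) * val v x) ^ 4) ∧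
        ((∫ x in Ω, (a * (max (-(val v x)) 0) ^ 2 + b * (max (val v x) 0) ^ 2))
            - b*C₀^2*vb / μ ^ 4
          ≤ ∫ x in Ω, (a * (max (-(η (μ * ‖x - x₀‖) * val v x)) 0) ^ 2 +
              b * (max (η (μ * ‖x - x₀‖) * val v x) 0) ^ 2)) := by
    intro μ hμle v hv hvn
    have hμpos : 0 < μ := lt_of_lt_of_le hμ₀pos hμle
    have hvM : v ∈ M := hNlM v hv
    obtain ⟨hwC2, hwgrad, hw4int⟩ := hregM v hvM
    have hKμ : Metric.closedBall x₀ (1/μ) ⊆ K :=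
      Metric.closedBall_subset_closedBall (one_div_le_one_div_of_le hμ₀pos hμle)
    have hvalb' : ∀ x ∈ K, |val v x| ≤ C₀ := by
      intro x hx; simpa [hvn] using hvalb v hvM x hx
    have hgradb' : ∀ x ∈ K, ‖grad v x‖ ≤ C₀ := by
      intro x hx; simpa [hvn] using hgradb v hvM x hx
    have hcbm : MeasurableSet (Metric.closedBall x₀ (1/μ)) := measurableSet_closedBall
    have hcbfin : volume (Metric.closedBall x₀ (1/μ)) ≠ ⊤ :=
      Metric.isBounded_closedBall.measure_lt_top.ne
    have hvolcb : (volume (Metric.closedBall x₀ (1/μ))).toReal = (1/μ)^4 * vb :=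
      stmt15_cb_vol x₀ (1/μ) (by positivity)
    have hwdiff : ∀ x ∈ Ω, DifferentiableAt ℝ (val v) x := fun x hx =>
      (hwC2.contDiffAt (hΩopen.mem_nhds hx)).differentiableAt (by norm_num)
    have hfdw : ∀ x ∈ Ω, ‖fderiv ℝ (val v) x‖ = ‖grad v x‖ := by
      intro x hx
      rw [hwgrad x hx]
      exact (stmt15_norm_grad_eq _ _).symm
    have hφdiff : ∀ x, DifferentiableAt ℝ
        (fun y : EuclideanSpace ℝ (Fin 4) => η (μ*‖y-x₀‖)) x :=
      stmt15_phidiff η hηsmooth hηzero μ hμpos x₀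
    have hφfd : ∀ x, ‖fderiv ℝ (fun y : EuclideanSpace ℝ (Fin 4) => η (μ*‖y-x₀‖)) x‖ ≤ 5*μ :=
      stmt15_phifderiv η hηsmooth hηderiv μ hμpos x₀
    have hmemcb : ∀ x : EuclideanSpace ℝ (Fin 4),
        ‖x - x₀‖ ≤ 1/μ → x ∈ Metric.closedBall x₀ (1/μ) := by
      intro x hx
      rw [Metric.mem_closedBall, dist_eq_norm]
      exact hx
    have hDle : C₀ + C₀*(5*μ) + C₀ ≤ μ*D := by
      rw [hDdef]
      have h1 : 2*C₀/μ₀*μ₀ = 2*C₀ := by field_simp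
      have h2 : 2*C₀/μ₀*μ₀ ≤ 2*C₀/μ₀*μ :=
        mul_le_mul_of_nonneg_left hμle (by positivity)
      nlinarith
    -- inner pointwise bounds
    have hin : ∀ x ∈ Ω, ‖x - x₀‖ ≤ 1/μ →
        ‖gradient (fun y => η (μ * ‖y - x₀‖) * val v y) x‖ ≤ μ*D ∧
        ‖gradient (fun y => η (μ * ‖y - x₀‖) * val v y - val v y) x‖ ≤ μ*D := by
      intro x hx hxball
      have hxK : x ∈ K := hKμ (hmemcb x hxball)
      have hd2 : DifferentiableAt ℝ (fun y => η (μ * ‖y - x₀‖) * val v y) x :=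
        (hφdiff x).mul (hwdiff x hx)
      have hb2 : ‖fderiv ℝ (fun y => η (μ * ‖y - x₀‖) * val v y) x‖ ≤ C₀ + C₀*(5*μ) := by
        rw [fderiv_fun_mul (hφdiff x) (hwdiff x hx)]
        refine (norm_add_le _ _).trans ?_
        rw [norm_smul, norm_smul]
        have hη01 := hηrange (μ * ‖x - x₀‖)
        have hη1 : ‖η (μ * ‖x - x₀‖)‖ ≤ 1 := by
          rw [Real.norm_eq_abs, abs_le]
          exact ⟨by linarith [hη01.1], hη01.2⟩
        have hηn : ‖η (μ * ‖x - x₀‖)‖ * ‖fderiv ℝ (val v) x‖ ≤ 1 * C₀ := by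
          apply mul_le_mul hη1 _ (norm_nonneg _) one_pos.le
          rw [hfdw x hx]
          exact hgradb' x hxK
        have hwn : ‖val v x‖ *
            ‖fderiv ℝ (fun y : EuclideanSpace ℝ (Fin 4) => η (μ*‖y-x₀‖)) x‖ ≤ C₀ * (5*μ) := by
          apply mul_le_mul _ (hφfd x) (norm_nonneg _) hC₀pos.le
          rw [Real.norm_eq_abs]
          exact hvalb' x hxK
        linarith
      constructor
      · rw [stmt15_norm_grad_eq]
        refine hb2.trans ?_
        nlinarith [hgradb' x hxK]
      · rw [stmt15_norm_grad_eq]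
        have hsub : fderiv ℝ (fun y => η (μ * ‖y - x₀‖) * val v y - val v y) x
            = fderiv ℝ (fun y => η (μ * ‖y - x₀‖) * val v y) x - fderiv ℝ (val v) x :=
          fderiv_sub hd2 (hwdiff x hx)
        rw [hsub]
        refine (norm_sub_le _ _).trans ?_
        have := hfdw x hx
        have := hgradb' x hxK
        linarith
    -- outer pointwise identities
    have hout : ∀ x ∈ Ω, 1/μ < ‖x - x₀‖ →
        gradient (fun y => η (μ * ‖y - x₀‖) * val v y) x = grad v x ∧
        gradient (fun y => η (μ * ‖y - x₀‖) * val v y - val v y) x = 0 := by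
      intro x hx hxout
      have hev := stmt15_ev_off_ball η hηone μ hμpos x₀ x (val v) hxout
      constructor
      · rw [hev.gradient_eq]
        exact (hwgrad x hx).symm
      · have hev1 : (fun y => η (μ * ‖y - x₀‖) * val v y - val v y)
            =ᶠ[nhds x] (fun _ => (0:ℝ)) := by
          filter_upwards [hev] with y hy
          rw [hy, sub_self]
        rw [hev1.gradient_eq, stmt15_grad_const]
    -- integrability helpers
    have hwaem : AEMeasurable (val v) (volume.restrict Ω) :=
      hwC2.continuousOn.aemeasurable hΩm
    have hφcont : Continuous (fun y : EuclideanSpace ℝ (Fin 4) => η (μ*‖y-x₀‖)) :=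
      (stmt15_philip η hηsmooth hηderiv μ hμpos x₀).continuous
    have hφwaem : AEMeasurable (fun x => η (μ*‖x-x₀‖) * val v x) (volume.restrict Ω) :=
      hφcont.aemeasurable.mul hwaem
    have hφw4le : ∀ x, (η (μ*‖x-x₀‖) * val v x)^4 ≤ (val v x)^4 := by
      intro x
      have hη01 := hηrange (μ * ‖x - x₀‖)
      have h1 : (η (μ*‖x-x₀‖))^4 ≤ 1 := pow_le_one₀ hη01.1 hη01.2
      calc (η (μ*‖x-x₀‖) * val v x)^4 = (η (μ*‖x-x₀‖))^4 * (val v x)^4 := by ring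
        _ ≤ 1 * (val v x)^4 :=
            mul_le_mul_of_nonneg_right h1 (by positivity)
        _ = (val v x)^4 := one_mul _
    have hφw4int : Integrable (fun x => (η (μ*‖x-x₀‖) * val v x)^4) (volume.restrict Ω) := by
      refine hw4int.mono' ((hφwaem.pow_const 4).aestronglyMeasurable) (ae_of_all _ ?_)
      intro x
      rw [Real.norm_eq_abs, abs_of_nonneg (by positivity)]
      exact hφw4le x
    have hindint : Integrable
        ((Metric.closedBall x₀ (1/μ)).indicator fun _ => (μ*D)^2) (volume.restrict Ω) := by
      rw [integrable_indicator_iff hcbm]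
      refine integrableOn_const ?_
      rw [Measure.restrict_apply hcbm]
      exact (lt_of_le_of_lt (measure_mono inter_subset_left) (lt_top_iff_ne_top.2 hcbfin)).ne
    have hvolbd : (μ*D)^2 * (volume (Metric.closedBall x₀ (1/μ))).toReal = D^2*vb / μ^2 := by
      rw [hvolcb]
      field_simp
    refine ⟨?_, ?_, ?_, ?_⟩
    -- (i)
    · have h := stmt15_int_le_ind Ω (Metric.closedBall x₀ (1/μ)) hΩm hcbm hcbfin
        ((μ*D)^2) (by positivity)
        (fun x => ‖gradient (fun y => η (μ * ‖y - x₀‖) * val v y - val v y) x‖ ^ 2)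
        (fun x _ => by positivity) ?_
      · rw [hvolbd] at h
        exact h
      · intro x hx
        rcases le_or_gt ‖x - x₀‖ (1/μ) with hle | hlt
        · rw [Set.indicator_of_mem (hmemcb x hle)]
          have := (hin x hx hle).2
          exact pow_le_pow_left₀ (norm_nonneg _) this 2
        · rw [(hout x hx hlt).2]
          simp only [norm_zero]
          refine le_trans (by norm_num) (Set.indicator_nonneg (fun _ _ => by positivity) x)
    -- (ii)
    · have hrhsint : Integrable (fun x => ‖grad v x‖^2 +
          (Metric.closedBall x₀ (1/μ)).indicator (fun _ => (μ*D)^2) x) (volume.restrict Ω) :=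
        (hgrad2 v).add hindint
      have h1 : (∫ x in Ω, ‖gradient (fun y => η (μ * ‖y - x₀‖) * val v y) x‖ ^ 2)
          ≤ ∫ x in Ω, (‖grad v x‖^2 +
            (Metric.closedBall x₀ (1/μ)).indicator (fun _ => (μ*D)^2) x) := by
        refine integral_mono_of_nonneg ?_ hrhsint ?_
        · exact ae_of_all _ (fun x => by positivity)
        · rw [Filter.EventuallyLE, ae_restrict_iff' hΩm]
          refine ae_of_all _ (fun x hx => ?_)
          rcases le_or_gt ‖x - x₀‖ (1/μ) with hle | hlt
          · rw [Set.indicator_of_mem (hmemcb x hle)]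
            have h2 := (hin x hx hle).1
            have h3 : ‖gradient (fun y => η (μ * ‖y - x₀‖) * val v y) x‖^2 ≤ (μ*D)^2 :=
              pow_le_pow_left₀ (norm_nonneg _) h2 2
            nlinarith [sq_nonneg ‖grad v x‖]
          · rw [(hout x hx hlt).1]
            have := Set.indicator_nonneg
              (fun (_ : EuclideanSpace ℝ (Fin 4)) (_ : _ ∈ Metric.closedBall x₀ (1/μ)) =>
                (by positivity : (0:ℝ) ≤ (μ*D)^2)) x
            linarith
      have h2 : (∫ x in Ω, (‖grad v x‖^2 +
            (Metric.closedBall x₀ (1/μ)).indicator (fun _ => (μ*D)^2) x))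
          = (∫ x in Ω, ‖grad v x‖^2) +
            ∫ x in Ω, (Metric.closedBall x₀ (1/μ)).indicator (fun _ => (μ*D)^2) x :=
        integral_add (hgrad2 v) hindint
      have h3 : (∫ x in Ω, (Metric.closedBall x₀ (1/μ)).indicator (fun _ => (μ*D)^2) x)
          ≤ D^2*vb / μ^2 := by
        rw [← hvolbd]
        refine stmt15_int_le_ind Ω (Metric.closedBall x₀ (1/μ)) hΩm hcbm hcbfin
          ((μ*D)^2) (by positivity) _ ?_ (fun x _ => le_refl _)
        exact fun x _ => Set.indicator_nonneg (fun _ _ => by positivity) x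
      linarith
    -- (iii)
    · have hdiff : (∫ x in Ω, ((val v x)^4 - (η (μ*‖x-x₀‖) * val v x)^4))
          ≤ C₀^4 * (volume (Metric.closedBall x₀ (1/μ))).toReal := by
        refine stmt15_int_le_ind Ω (Metric.closedBall x₀ (1/μ)) hΩm hcbm hcbfin
          (C₀^4) (by positivity) _ (fun x _ => by linarith [hφw4le x]) ?_
        intro x hx
        rcases le_or_gt ‖x - x₀‖ (1/μ) with hle | hlt
        · rw [Set.indicator_of_mem (hmemcb x hle)]
          have h1 : (val v x)^4 ≤ C₀^4 :=
            stmt15_pow4_le_of_abs_le _ _ (hvalb' x (hKμ (hmemcb x hle)))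
          have h2 : 0 ≤ (η (μ*‖x-x₀‖) * val v x)^4 := by positivity
          linarith
        · have hone : η (μ*‖x-x₀‖) = 1 := by
            apply hηone
            rw [div_lt_iff₀ hμpos] at hlt
            nlinarith
          rw [hone, one_mul, sub_self]
          exact Set.indicator_nonneg (fun _ _ => by positivity) x
      have heq : (∫ x in Ω, ((val v x)^4 - (η (μ*‖x-x₀‖) * val v x)^4))
          = (∫ x in Ω, (val v x)^4) - ∫ x in Ω, (η (μ*‖x-x₀‖) * val v x)^4 :=
        integral_sub hw4int hφw4int
      have hveq : C₀^4 * (volume (Metric.closedBall x₀ (1/μ))).toReal = C₀^4*vb / μ^4 := by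
        rw [hvolcb]; field_simp; try ring
      rw [heq, hveq] at hdiff
      linarith
    -- (iv)
    · have hFwaesm : AEStronglyMeasurable
          (fun x => a * (max (-(val v x)) 0)^2 + b * (max (val v x) 0)^2)
          (volume.restrict Ω) := by
        refine AEMeasurable.aestronglyMeasurable ?_
        exact (((hwaem.neg.max aemeasurable_const).pow_const 2).const_mul a).add
          (((hwaem.max aemeasurable_const).pow_const 2).const_mul b)
      have hFφwaesm : AEStronglyMeasurable
          (fun x => a * (max (-(η (μ*‖x-x₀‖) * val v x)) 0)^2 +
            b * (max (η (μ*‖x-x₀‖) * val v x) 0)^2) (volume.restrict Ω) := by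
        refine AEMeasurable.aestronglyMeasurable ?_
        exact (((hφwaem.neg.max aemeasurable_const).pow_const 2).const_mul a).add
          (((hφwaem.max aemeasurable_const).pow_const 2).const_mul b)
      have hbw2int : Integrable (fun x => b * (val v x)^2) (volume.restrict Ω) :=
        (hval2 v).const_mul b
      have hFwint : Integrable
          (fun x => a * (max (-(val v x)) 0)^2 + b * (max (val v x) 0)^2)
          (volume.restrict Ω) := by
        refine hbw2int.mono' hFwaesm (ae_of_all _ (fun x => ?_))
        rw [Real.norm_eq_abs, abs_of_nonneg (by positivity)]
        exact stmt15_F_le a b (val v x) hapos.le hab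
      have hFmono : ∀ x, a * (max (-(η (μ*‖x-x₀‖) * val v x)) 0)^2 +
            b * (max (η (μ*‖x-x₀‖) * val v x) 0)^2
          ≤ a * (max (-(val v x)) 0)^2 + b * (max (val v x) 0)^2 := by
        intro x
        have hη01 := hηrange (μ * ‖x - x₀‖)
        exact stmt15_F_mono a b (val v x) hapos.le hb.le _ hη01.1 hη01.2
      have hFφwint : Integrable
          (fun x => a * (max (-(η (μ*‖x-x₀‖) * val v x)) 0)^2 +
            b * (max (η (μ*‖x-x₀‖) * val v x) 0)^2) (volume.restrict Ω) := by
        refine hbw2int.mono' hFφwaesm (ae_of_all _ (fun x => ?_))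
        rw [Real.norm_eq_abs, abs_of_nonneg (by positivity)]
        exact le_trans (hFmono x) (stmt15_F_le a b (val v x) hapos.le hab)
      have hdiff : (∫ x in Ω, ((a * (max (-(val v x)) 0)^2 + b * (max (val v x) 0)^2) -
            (a * (max (-(η (μ*‖x-x₀‖) * val v x)) 0)^2 +
             b * (max (η (μ*‖x-x₀‖) * val v x) 0)^2)))
          ≤ (b*C₀^2) * (volume (Metric.closedBall x₀ (1/μ))).toReal := by
        refine stmt15_int_le_ind Ω (Metric.closedBall x₀ (1/μ)) hΩm hcbm hcbfin
          (b*C₀^2) (by positivity) _ (fun x _ => by linarith [hFmono x]) ?_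
        intro x hx
        rcases le_or_gt ‖x - x₀‖ (1/μ) with hle | hlt
        · rw [Set.indicator_of_mem (hmemcb x hle)]
          have h1 : a * (max (-(val v x)) 0)^2 + b * (max (val v x) 0)^2 ≤ b * (val v x)^2 :=
            stmt15_F_le a b (val v x) hapos.le hab
          have h2 : (val v x)^2 ≤ C₀^2 := by
            nlinarith [hvalb' x (hKμ (hmemcb x hle)), sq_abs (val v x), abs_nonneg (val v x)]
          have h3 : 0 ≤ a * (max (-(η (μ*‖x-x₀‖) * val v x)) 0)^2 +
              b * (max (η (μ*‖x-x₀‖) * val v x) 0)^2 := by positivity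
          nlinarith
        · have hone : η (μ*‖x-x₀‖) = 1 := by
            apply hηone
            rw [div_lt_iff₀ hμpos] at hlt
            nlinarith
          rw [hone, one_mul, sub_self]
          exact Set.indicator_nonneg (fun _ _ => by positivity) x
      have heq := integral_sub hFwint hFφwint
      rw [heq] at hdiff
      have hveq : (b*C₀^2) * (volume (Metric.closedBall x₀ (1/μ))).toReal
          = b*C₀^2*vb / μ^4 := by
        rw [hvolcb]; field_simp; try ring
      rw [hveq] at hdiff
      linarith
  refine ⟨D^2*vb, D^2*vb, C₀^4*vb, b*C₀^2*vb, by positivity, by positivity, by positivity,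
    by positivity, hmain, ?_⟩
  refine ⟨D^2*vb + (b*C₀^2*vb)/μ₀^2, by positivity, ?_⟩
  intro μ hμle v hv hvn t ht
  obtain ⟨h1, h2, h3, h4⟩ := hmain μ hμle v hv hvn
  have hμpos : 0 < μ := lt_of_lt_of_le hμ₀pos hμle
  have hvM : v ∈ M := hNlM v hv
  obtain ⟨hwC2, hwgrad, hw4int⟩ := hregM v hvM
  have hwaem : AEMeasurable (val v) (volume.restrict Ω) :=
    hwC2.continuousOn.aemeasurable hΩm
  -- pull out the factor t
  have hT1 : (∫ x in Ω, ‖gradient (fun y => t * (η (μ * ‖y - x₀‖) * val v y)) x‖ ^ 2)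
      = t^2 * ∫ x in Ω, ‖gradient (fun y => η (μ * ‖y - x₀‖) * val v y) x‖ ^ 2 := by
    rw [show (fun x : EuclideanSpace ℝ (Fin 4) =>
        ‖gradient (fun y => t * (η (μ * ‖y - x₀‖) * val v y)) x‖ ^ 2)
      = (fun x : EuclideanSpace ℝ (Fin 4) =>
        t^2 * ‖gradient (fun y => η (μ * ‖y - x₀‖) * val v y) x‖ ^ 2) from funext fun x => by
        rw [stmt15_grad_const_mul (fun y => η (μ * ‖y - x₀‖) * val v y) t x, norm_smul,
          Real.norm_eq_abs, mul_pow, sq_abs]]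
    exact integral_const_mul _ _
  have hT2 : (∫ x in Ω, (a * (max (-(t * (η (μ * ‖x - x₀‖) * val v x))) 0) ^ 2 +
        b * (max (t * (η (μ * ‖x - x₀‖) * val v x)) 0) ^ 2))
      = t^2 * ∫ x in Ω, (a * (max (-(η (μ * ‖x - x₀‖) * val v x)) 0) ^ 2 +
        b * (max (η (μ * ‖x - x₀‖) * val v x) 0) ^ 2) := by
    rw [show (fun x : EuclideanSpace ℝ (Fin 4) =>
        a * (max (-(t * (η (μ * ‖x - x₀‖) * val v x))) 0) ^ 2 +
        b * (max (t * (η (μ * ‖x - x₀‖) * val v x)) 0) ^ 2)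
      = (fun x : EuclideanSpace ℝ (Fin 4) =>
        t^2 * (a * (max (-(η (μ * ‖x - x₀‖) * val v x)) 0) ^ 2 +
        b * (max (η (μ * ‖x - x₀‖) * val v x) 0) ^ 2)) from funext fun x =>
        stmt15_F_scale a b _ t ht]
    exact integral_const_mul _ _
  have hT3 : (∫ x in Ω, (t * (η (μ * ‖x - x₀‖) * val v x)) ^ 4)
      = t^4 * ∫ x in Ω, (η (μ * ‖x - x₀‖) * val v x) ^ 4 := by
    rw [show (fun x : EuclideanSpace ℝ (Fin 4) => (t * (η (μ * ‖x - x₀‖) * val v x)) ^ 4)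
      = (fun x : EuclideanSpace ℝ (Fin 4) => t^4 * (η (μ * ‖x - x₀‖) * val v x) ^ 4)
        from funext fun x => by rw [mul_pow]]
    exact integral_const_mul _ _
  rw [hT1, hT2, hT3]
  -- abbreviations
  set A := ∫ x in Ω, ‖gradient (fun y => η (μ * ‖y - x₀‖) * val v y) x‖ ^ 2 with hA
  set G := ∫ x in Ω, ‖grad v x‖ ^ 2 with hG
  set Fm := ∫ x in Ω, (a * (max (-(η (μ * ‖x - x₀‖) * val v x)) 0) ^ 2 +
      b * (max (η (μ * ‖x - x₀‖) * val v x) 0) ^ 2) with hFm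
  set F0 := ∫ x in Ω, (a * (max (-(val v x)) 0) ^ 2 + b * (max (val v x) 0) ^ 2) with hF0
  set Pm := ∫ x in Ω, (η (μ * ‖x - x₀‖) * val v x) ^ 4 with hPm
  set P := ∫ x in Ω, (val v x) ^ 4 with hP
  set I1 := ∫ x in Ω, (max (-(val v x)) 0) ^ 2 with hI1
  set I2 := ∫ x in Ω, (max (val v x) 0) ^ 2 with hI2
  -- splitting F0
  have hmax1int : Integrable (fun x => (max (-(val v x)) 0) ^ 2) (volume.restrict Ω) := by
    refine (hval2 v).mono'
      (((hwaem.neg.max aemeasurable_const).pow_const 2).aestronglyMeasurable)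
      (ae_of_all _ (fun x => ?_))
    rw [Real.norm_eq_abs, abs_of_nonneg (by positivity)]
    exact (stmt15_sq_max_le (val v x)).1
  have hmax2int : Integrable (fun x => (max (val v x) 0) ^ 2) (volume.restrict Ω) := by
    refine (hval2 v).mono'
      (((hwaem.max aemeasurable_const).pow_const 2).aestronglyMeasurable)
      (ae_of_all _ (fun x => ?_))
    rw [Real.norm_eq_abs, abs_of_nonneg (by positivity)]
    exact (stmt15_sq_max_le (val v x)).2
  have hsplit : F0 = a * I1 + b * I2 := by
    rw [hF0, hI1, hI2,
      integral_add (hmax1int.const_mul a) (hmax2int.const_mul b),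
      integral_const_mul, integral_const_mul]
  -- numeric estimates
  have h28 : (b*C₀^2*vb)/μ^4 ≤ ((b*C₀^2*vb)/μ₀^2)/μ^2 := by
    rw [div_div]
    have hsq : μ₀^2 ≤ μ^2 := by nlinarith
    have hmono : μ₀^2*μ^2 ≤ μ^4 := by nlinarith [hsq, sq_nonneg μ]
    exact div_le_div_of_nonneg_left (by positivity) (by positivity) hmono
  have key : A - Fm ≤ (G - (a * I1 + b * I2)) + (D^2*vb + (b*C₀^2*vb)/μ₀^2)/μ^2 := by
    have hadd : (D^2*vb + (b*C₀^2*vb)/μ₀^2)/μ^2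
        = D^2*vb/μ^2 + ((b*C₀^2*vb)/μ₀^2)/μ^2 := add_div _ _ _
    rw [← hsplit]
    linarith [h2, h4, h28]
  have hkey1 : (1/2)*(t^2*A) - (1/2)*(t^2*Fm)
      ≤ (1/2)*((G - a*I1 - b*I2) + (D^2*vb + (b*C₀^2*vb)/μ₀^2)/μ^2)*t^2 := by
    nlinarith [key, sq_nonneg t]
  have hkey2 : (1/4)*(P - C₀^4*vb/μ^4)*t^4 ≤ (1/4)*(t^4*Pm) := by
    nlinarith [h3, pow_nonneg ht 4]
  linarith [hkey1, hkey2]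
end
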